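/- Let A_1, …, A_k be pairwise commuting N×N matrices with nonnegative integer entries and no zero rows which form an irreducible family, and let ρ_i be the spectral radius of A_i. If ρ_1⋯ρ_k > 1, then the infinite path space X_B of the stationary k-Bratteli diagram B of (A_1,…,A_k) is a Cantor set: X_B is nonempty, compact, Hausdorff, totally disconnected, metrizable, and has no isolated points. -/

import Mathlib

open scoped Classical ENNReal Topology
open TopologicalSpace MeasureTheory Filter Set
open Fin.NatCast

namespace KBratteli

variable (k N : ℕ) [NeZero k] (A : Fin k → Matrix (Fin N) (Fin N) ℕ)

/-- An edge at level `n` of the stationary `k`-Bratteli diagram of the matrices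
`A 0, …, A (k-1)`: an element of `Edge k N A n` is an edge whose source lies in the
level-`(n+1)` vertex set and whose range lies in the level-`n` vertex set (both copies of
`Fin N`); there are exactly `A (n % k) p q` edges with range `p` and source `q`. -/
structure Edge (n : ℕ) : Type where
  rg : Fin N
  src : Fin N
  idx : Fin (A (n : Fin k) rg src)

/-- The infinite path space `X_B` of the stationary `k`-Bratteli diagram of `A`. -/
def PathSpace : Type :=
  { x : (n : ℕ) → Edge k N A n // ∀ n, (x n).src = (x (n + 1)).rg }

/-- A finite path of length `ℓ` beginning at level `0`: a composable string of edges,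
together with the vertices it visits.  Length-`0` paths are vertices of `V₀`. -/
structure FinPath (ℓ : ℕ) : Type where
  vtx : Fin (ℓ + 1) → Fin N
  edge : (i : Fin ℓ) → Edge k N A i
  rg_eq : ∀ i : Fin ℓ, (edge i).rg = vtx i.castSucc
  src_eq : ∀ i : Fin ℓ, (edge i).src = vtx i.succ

/-- `FB`: the set of all finite paths (of all lengths) beginning at level `0`. -/
abbrev FB : Type := Σ ℓ : ℕ, FinPath k N A ℓ

variable {k N A}

/-- The source (final) vertex of a finite path. -/
def FinPath.src {ℓ : ℕ} (lam : FinPath k N A ℓ) : Fin N := lam.vtx (Fin.last ℓ)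

/-- The range (initial, level-0) vertex of a finite path. -/
def FinPath.rg {ℓ : ℕ} (lam : FinPath k N A ℓ) : Fin N := lam.vtx 0

/-- The length-0 finite path at the level-0 vertex `v`. -/
def vertexPath (v : Fin N) : FinPath k N A 0 where
  vtx := fun _ => v
  edge := fun i => i.elim0
  rg_eq := fun i => i.elim0
  src_eq := fun i => i.elim0

/-- The cylinder set `[λ]` of a finite path `λ`: all infinite paths with initial
segment `λ`. -/
def Cyl {ℓ : ℕ} (lam : FinPath k N A ℓ) : Set (PathSpace k N A) :=
  { x | (x.1 0).rg = lam.rg ∧ ∀ i : Fin ℓ, x.1 i = lam.edge i }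

variable (k N A) in
/-- The collection of all cylinder sets. -/
def cylinderSets : Set (Set (PathSpace k N A)) :=
  { S | ∃ (ℓ : ℕ) (lam : FinPath k N A ℓ), S = Cyl lam }

/-- The cylinder-set topology on the infinite path space. -/
instance : TopologicalSpace (PathSpace k N A) :=
  generateFrom (cylinderSets k N A)

/-- The Borel σ-algebra of the cylinder-set topology. -/
instance : MeasurableSpace (PathSpace k N A) := borel _

instance : BorelSpace (PathSpace k N A) := ⟨rfl⟩

lemma isOpen_cyl {ℓ : ℕ} (lam : FinPath k N A ℓ) : IsOpen (Cyl lam) :=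
  isOpen_generateFrom_of_mem ⟨ℓ, lam, rfl⟩

lemma measurableSet_cyl {ℓ : ℕ} (lam : FinPath k N A ℓ) : MeasurableSet (Cyl lam) :=
  (isOpen_cyl lam).measurableSet

/-- Edges form a finite type. -/
def edgeEquiv (n : ℕ) : Edge k N A n ≃ Σ p : Fin N, Σ q : Fin N, Fin (A (n : Fin k) p q) where
  toFun e := ⟨e.rg, e.src, e.idx⟩
  invFun t := ⟨t.1, t.2.1, t.2.2⟩
  left_inv e := rfl
  right_inv t := rfl

instance (n : ℕ) : Finite (Edge k N A n) := by
  have : ∀ p : Fin N, Finite (Σ q : Fin N, Fin (A (n : Fin k) p q)) := fun _ => inferInstance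
  exact Finite.of_equiv _ (edgeEquiv n).symm

instance (ℓ : ℕ) : Finite (FinPath k N A ℓ) := by
  have hinj : Function.Injective
      (fun lam : FinPath k N A ℓ => (lam.vtx, lam.edge)) := by
    rintro ⟨v, e, h1, h2⟩ ⟨v', e', h1', h2'⟩ h
    simp only [Prod.mk.injEq] at h
    obtain ⟨hv, he⟩ := h
    subst hv; subst he; rfl
  exact Finite.of_injective _ hinj

instance : Countable (FB k N A) := by infer_instance

/-- The initial segment of length `m` of an infinite path. -/
def prefixPath (x : PathSpace k N A) (m : ℕ) : FinPath k N A m where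
  vtx := fun i => (x.1 i).rg
  edge := fun i => x.1 i
  rg_eq := fun _ => rfl
  src_eq := fun i => x.2 i

lemma mem_cyl_prefixPath (x : PathSpace k N A) (m : ℕ) : x ∈ Cyl (prefixPath x m) :=
  ⟨rfl, fun _ => rfl⟩

lemma measurableSet_coord (j : ℕ) (P : Edge k N A j → Prop) :
    MeasurableSet { x : PathSpace k N A | P (x.1 j) } := by
  have h : { x : PathSpace k N A | P (x.1 j) }
      = ⋃ (lam : FinPath k N A (j + 1)) (_ : P (lam.edge (Fin.last j))), Cyl lam := by
    ext x
    simp only [Set.mem_setOf_eq, Set.mem_iUnion]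
    constructor
    · intro hx
      exact ⟨prefixPath x (j + 1), hx, mem_cyl_prefixPath x (j + 1)⟩
    · rintro ⟨lam, hP, -, hedge⟩
      have hx : x.1 j = lam.edge (Fin.last j) := hedge (Fin.last j)
      rw [hx]; exact hP
  rw [h]
  exact MeasurableSet.iUnion fun lam => MeasurableSet.iUnion fun _ => measurableSet_cyl lam

/-- The first level at which two infinite paths differ. -/
noncomputable def firstDiff (x y : PathSpace k N A) : ℕ := sInf { n | x.1 n ≠ y.1 n }

/-- The function `d_w` associated to a weight-type function `w` on finite paths:
`d_w(x,x) = 0`; `d_w(x,y) = 1` if `x` and `y` have no common initial sub-path (i.e. they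
do not even start at the same level-0 vertex); and otherwise `d_w(x,y) = w(x ∧ y)`, the
value of `w` on the longest common initial sub-path of `x` and `y`. -/
noncomputable def distW (w : FB k N A → ℝ) (x y : PathSpace k N A) : ℝ :=
  if x = y then 0
  else if (x.1 0).rg = (y.1 0).rg then w ⟨firstDiff x y, prefixPath x (firstDiff x y)⟩
  else 1

/-- `η` is an (initial) sub-path of `λ`. -/
def IsSubPath {m ℓ : ℕ} (η : FinPath k N A m) (lam : FinPath k N A ℓ) : Prop :=
  ∃ h : m ≤ ℓ, η.rg = lam.rg ∧ ∀ i : Fin m, η.edge i = lam.edge (Fin.castLE h i)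

/-- `lam ∈ F_γ B` : the finite path `lam` extends `γ`. -/
def Extends {m : ℕ} (γ : FinPath k N A m) (lam : FB k N A) : Prop :=
  IsSubPath γ lam.2

/-- The spectral radius of a matrix of nonnegative integers, as a real number. -/
noncomputable def specRad {N : ℕ} (M : Matrix (Fin N) (Fin N) ℕ) : ℝ :=
  (spectralRadius ℂ (M.map (Nat.cast : ℕ → ℂ))).toReal

/-- The weight `w_δ` on the stationary `k`-Bratteli diagram of `A`, relative to data
`ρ : Fin k → ℝ` (the spectral radii) and `xv : Fin N → ℝ` (the Perron–Frobenius
eigenvector): on a path `η` of length `q·k + t` (`0 ≤ t ≤ k-1`) it is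
`(ρ₁^{q+1} ⋯ ρ_t^{q+1} · ρ_{t+1}^q ⋯ ρ_k^q)^{-1/δ} · xv (s η)`. -/
noncomputable def wt (δ : ℝ) (ρ : Fin k → ℝ) (xv : Fin N → ℝ) (lam : FB k N A) : ℝ :=
  (∏ i : Fin k, ρ i ^ (if (i : ℕ) < lam.1 % k then lam.1 / k + 1 else lam.1 / k))
      ^ (-(1 / δ)) * xv lam.2.src

/-- The value `M([λ]) = (ρ₁⋯ρ_t)^{-(q+1)} (ρ_{t+1}⋯ρ_k)^{-q} · x_{s(λ)}` of the
measure `M` on the cylinder set of a path of length `q·k + t`. -/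
noncomputable def Mval (ρ : Fin k → ℝ) (xv : Fin N → ℝ) (lam : FB k N A) : ℝ :=
  (∏ i : Fin k, ρ i ^ (if (i : ℕ) < lam.1 % k then lam.1 / k + 1 else lam.1 / k))⁻¹
    * xv lam.2.src

/-- A family of matrices is irreducible if for every pair of indices some finite product
of matrices from the family has positive corresponding entry. -/
def IrreducibleFamily {k N : ℕ} (A : Fin k → Matrix (Fin N) (Fin N) ℕ) : Prop :=
  ∀ a b : Fin N, ∃ l : List (Fin k), 0 < (l.map A).prod a b

/-- A single square matrix with nonnegative integer entries is irreducible if for every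
pair of indices some positive power has positive corresponding entry. -/
def MatIrreducible {N : ℕ} (B : Matrix (Fin N) (Fin N) ℕ) : Prop :=
  ∀ a b : Fin N, ∃ m : ℕ, 0 < m ∧ 0 < (B ^ m) a b

/-- The diameter (in `ℝ≥0∞`) of a set of infinite paths relative to `d_w`. -/
noncomputable def diamW (w : FB k N A → ℝ) (U : Set (PathSpace k N A)) : ℝ≥0∞ :=
  ⨆ (x) (_ : x ∈ U) (y) (_ : y ∈ U), ENNReal.ofReal (distW w x y)

/-- The `t`-dimensional Hausdorff (outer) measure of a set `Z` relative to the metric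
`d_w`: `H^t(Z) = lim_{ε → 0} inf { Σᵢ (diam Uᵢ)^t : Z ⊆ ⋃ᵢ Uᵢ, diam Uᵢ < ε }`. -/
noncomputable def hausW (w : FB k N A → ℝ) (t : ℝ) (Z : Set (PathSpace k N A)) : ℝ≥0∞ :=
  ⨆ (ε : ℝ≥0∞) (_ : 0 < ε),
    ⨅ (U : ℕ → Set (PathSpace k N A)) (_ : Z ⊆ ⋃ n, U n)
      (_ : ∀ n, diamW w (U n) < ε), ∑' n, diamW w (U n) ^ t

lemma natCast_mul_add (n i : ℕ) : ((n * k + i : ℕ) : Fin k) = (i : Fin k) := by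
  push_cast
  simp [Fin.natCast_self]

/-- Transport of edges between levels governed by the same matrix (the diagram is
stationary with period `k`). -/
def Edge.cast {i j : ℕ} (h : (i : Fin k) = (j : Fin k)) (e : Edge k N A i) :
    Edge k N A j where
  rg := e.rg
  src := e.src
  idx := Fin.cast (by rw [h]) e.idx

/-- The cylinder set `[γ e]` of a finite path `γ` (of length `m`) extended by one
further edge `e` at level `m`. -/
def cylExt {m : ℕ} (γ : FinPath k N A m) (e : Edge k N A m) : Set (PathSpace k N A) :=
  Cyl γ ∩ { x | x.1 m = e }

lemma measurableSet_cylExt {m : ℕ} (γ : FinPath k N A m) (e : Edge k N A m) :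
    MeasurableSet (cylExt γ e) :=
  (measurableSet_cyl γ).inter (measurableSet_coord m fun f => f = e)

/-- The cylinder set `[λ μ]` of the concatenation of `λ ∈ F^{nk}B` with `μ ∈ F^{k}B`
(the diagram being stationary of period `k`, `μ` concatenates onto `λ`). -/
def cylCat {n : ℕ} (lam : FinPath k N A (n * k)) (η : FinPath k N A k) :
    Set (PathSpace k N A) :=
  Cyl lam ∩ { x | (x.1 (n * k)).rg = η.rg } ∩
    ⋂ i : Fin k,
      { x | x.1 (n * k + (i : ℕ)) = Edge.cast (natCast_mul_add n (i : ℕ)).symm (η.edge i) }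

lemma measurableSet_cylCat {n : ℕ} (lam : FinPath k N A (n * k)) (η : FinPath k N A k) :
    MeasurableSet (cylCat lam η) :=
  ((measurableSet_cyl lam).inter
      (measurableSet_coord (n * k) (fun e => e.rg = η.rg))).inter
    (MeasurableSet.iInter fun i => measurableSet_coord (n * k + (i : ℕ))
      (fun e => e = Edge.cast (natCast_mul_add n (i : ℕ)).symm (η.edge i)))



end KBratteli

/-!
The path space embeds as a closed subset of the product `∏ₙ Eₙ` of the finite discrete
edge sets, which makes it compact, Hausdorff, totally disconnected and metrizable.

Suppose a path `x` had a cylinder neighbourhood containing no other path. Then from some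
level on every vertex of `x` emits exactly one edge, so the corresponding rows of the
matrices are unit vectors, and for `P = A 0 ⋯ A (k-1)` the row sums of all powers `P ^ q`
at one vertex `a` equal `1`. Since the `A i` commute, `P ^ q` factors as `W * A j * R`
for any word `W` in the `A i` of length `< q`; choosing `W` with `W a c > 0` by
irreducibility gives row sum `≤ 1` for every row `c` of every `A j`. All row sums being
`≤ 1`, the `ℓ∞` operator norm bounds every spectral radius by `1`, contradicting
`∏ ρ i > 1`.
-/

lemma List.prod_map_dvd_pow_length {M ι : Type*} [CommMonoid M] {f : ι → M} {p : M}
    {l : List ι} (h : ∀ i ∈ l, f i ∣ p) : (l.map f).prod ∣ p ^ l.length := by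
  induction l with
  | nil => simp
  | cons i l ih =>
    rw [List.map_cons, List.prod_cons, List.length_cons, pow_succ']
    exact mul_dvd_mul (h i List.mem_cons_self) (ih fun j hj => h j (List.mem_cons_of_mem i hj))

namespace KBratteli

open Matrix Topology

section NatMatrix

variable {ι : Type*} [Fintype ι]

lemma apply_mul_le_mulVec (M : Matrix ι ι ℕ) (v : ι → ℕ) (a c : ι) :
    M a c * v c ≤ (M *ᵥ v) a :=
  Finset.single_le_sum (f := fun b => M a b * v b) (by simp) (Finset.mem_univ c)

lemma mulVec_apply_of_row_eq_single {α : Type*} [NonAssocSemiring α] [DecidableEq ι]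
    {M : Matrix ι ι α} {a b : ι} (h : M a = Pi.single b 1) (v : ι → α) :
    (M *ᵥ v) a = v b := by
  rw [mulVec, h, single_dotProduct, one_mul]

variable [DecidableEq ι]

variable (ι) in
def noZeroRows : Submonoid (Matrix ι ι ℕ) where
  carrier := {M | ∀ a, ∃ b, 0 < M a b}
  one_mem' a := ⟨a, by simp⟩
  mul_mem' {M M'} hM hM' a := by
    obtain ⟨b, hb⟩ := hM a
    obtain ⟨c, hc⟩ := hM' b
    refine ⟨c, lt_of_lt_of_le (Nat.mul_pos hb hc) ?_⟩
    rw [mul_apply]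
    exact Finset.single_le_sum (f := fun b => M a b * M' b c) (by simp) (Finset.mem_univ b)

lemma one_le_mulVec_one {M : Matrix ι ι ℕ} (hM : M ∈ noZeroRows ι) :
    1 ≤ M *ᵥ 1 := fun a => by
  obtain ⟨b, hb⟩ := hM a
  simp only [Pi.one_apply, mulVec, dotProduct, mul_one]
  exact hb.trans_le (Finset.single_le_sum (by simp) (Finset.mem_univ b))

lemma mulVec_one_le_mul_mulVec_one (M : Matrix ι ι ℕ) {M' : Matrix ι ι ℕ}
    (hM' : M' ∈ noZeroRows ι) : M *ᵥ 1 ≤ (M * M') *ᵥ 1 := fun a => by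
  rw [← mulVec_mulVec]
  exact Finset.sum_le_sum fun b _ => Nat.mul_le_mul_left _ (one_le_mulVec_one hM' b)

end NatMatrix

section CommutingFamily

variable {k N : ℕ} {A : Fin k → Matrix (Fin N) (Fin N) ℕ}

open scoped IsMulCommutative in
lemma exists_prod_ofFn_pow_eq (hcomm : ∀ i j, A i * A j = A j * A i) (w : List (Fin k))
    (j : Fin k) : ∃ R ∈ Submonoid.closure (Set.range A),
      (List.ofFn A).prod ^ (w.length + 1) = (w.map A).prod * A j * R := by
  set S := Submonoid.closure (Set.range A)
  have : IsMulCommutative S := Submonoid.isMulCommutative_closure _ (by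
    rintro _ ⟨i, rfl⟩ _ ⟨i', rfl⟩
    exact hcomm i i')
  let A' : Fin k → S := fun i => ⟨A i, Submonoid.subset_closure (Set.mem_range_self i)⟩
  have hdvd : ∀ i ∈ w ++ [j], A' i ∣ (List.ofFn A').prod :=
    fun i _ => List.dvd_prod (List.mem_ofFn.2 ⟨i, rfl⟩)
  obtain ⟨R, hR⟩ := List.prod_map_dvd_pow_length hdvd
  refine ⟨R, R.2, ?_⟩
  have := congrArg Subtype.val hR
  simpa [Submonoid.coe_list_prod, List.map_ofFn, List.map_map, Function.comp_def, A'] using this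

lemma mulVec_one_le_one_of_forall_pow (hcomm : ∀ i j, A i * A j = A j * A i)
    (hrow : ∀ i a, ∃ b, 0 < A i a b) (hirr : IrreducibleFamily A) {a : Fin N}
    (h : ∀ q, ((List.ofFn A).prod ^ q *ᵥ 1) a ≤ 1) (j : Fin k) : A j *ᵥ 1 ≤ 1 := by
  intro c
  obtain ⟨w, hw⟩ := hirr a c
  obtain ⟨R, hRS, hPR⟩ := exists_prod_ofFn_pow_eq hcomm w j
  have hR : R ∈ noZeroRows (Fin N) :=
    Submonoid.closure_le.2 (by rintro _ ⟨i, rfl⟩; exact hrow i) hRS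
  calc (A j *ᵥ 1) c ≤ ((A j * R) *ᵥ 1) c := mulVec_one_le_mul_mulVec_one _ hR c
    _ ≤ (w.map A).prod a c * ((A j * R) *ᵥ 1) c := Nat.le_mul_of_pos_left _ hw
    _ ≤ ((w.map A).prod *ᵥ (A j * R) *ᵥ 1) a := apply_mul_le_mulVec _ _ a c
    _ = ((List.ofFn A).prod ^ (w.length + 1) *ᵥ 1) a := by rw [hPR, mul_assoc, mulVec_mulVec]
    _ ≤ 1 := h _

end CommutingFamily

lemma specRad_le_one {N : ℕ} [NeZero N] {M : Matrix (Fin N) (Fin N) ℕ} (hM : M *ᵥ 1 ≤ 1) :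
    specRad M ≤ 1 := by
  let _ : NormedRing (Matrix (Fin N) (Fin N) ℂ) := Matrix.linftyOpNormedRing
  let _ : NormedAlgebra ℂ (Matrix (Fin N) (Fin N) ℂ) := Matrix.linftyOpNormedAlgebra
  have hnorm : ‖M.map (Nat.cast : ℕ → ℂ)‖₊ ≤ 1 := by
    rw [Matrix.linfty_opNNNorm_def]
    refine Finset.sup_le fun a _ => ?_
    have hrow : ∑ b, M a b ≤ 1 := by simpa [Matrix.mulVec, dotProduct] using hM a
    simpa using (by exact_mod_cast hrow : ∑ b, (M a b : NNReal) ≤ 1)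
  have := (spectrum.spectralRadius_le_nnnorm (𝕜 := ℂ) (M.map (Nat.cast : ℕ → ℂ))).trans
    (ENNReal.coe_le_coe.2 hnorm)
  simpa [specRad] using ENNReal.toReal_mono ENNReal.one_ne_top this

section LevelProd

variable {k N : ℕ} [NeZero k] (A : Fin k → Matrix (Fin N) (Fin N) ℕ)

def levelProd (n L : ℕ) : Matrix (Fin N) (Fin N) ℕ :=
  ((List.range L).map fun j => A ((n + j : ℕ) : Fin k)).prod

lemma levelProd_add (n L L' : ℕ) :
    levelProd A n (L + L') = levelProd A n L * levelProd A (n + L) L' := by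
  simp only [levelProd, List.range_add, List.map_append, List.prod_append, List.map_map,
    Function.comp_def, add_assoc]

lemma levelProd_succ (n L : ℕ) :
    levelProd A n (L + 1) = A (n : Fin k) * levelProd A (n + 1) L := by
  rw [add_comm, levelProd_add]
  simp [levelProd]

lemma levelProd_mul_self (m : ℕ) : levelProd A (m * k) k = (List.ofFn A).prod := by
  rw [levelProd, List.ofFn_eq_map, ← List.map_coe_finRange_eq_range, List.map_map]
  congr 2
  funext i
  show A ((m * k + (i : ℕ) : ℕ) : Fin k) = A i
  rw [natCast_mul_add, Fin.cast_val_eq_self]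

lemma levelProd_mul_mul (l q : ℕ) :
    levelProd A (l * k) (q * k) = (List.ofFn A).prod ^ q := by
  induction q with
  | zero => simp [levelProd]
  | succ q ih =>
    rw [add_mul, one_mul, levelProd_add, ih, ← add_mul, levelProd_mul_self, pow_succ]

end LevelProd

section PathSpace

variable {k N : ℕ} [NeZero k] {A : Fin k → Matrix (Fin N) (Fin N) ℕ}

instance (n : ℕ) : TopologicalSpace (Edge k N A n) := ⊥

instance (n : ℕ) : DiscreteTopology (Edge k N A n) := ⟨rfl⟩

lemma cyl_prefixPath_subset (x : PathSpace k N A) {l l' : ℕ} (h : l ≤ l') :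
    Cyl (prefixPath x l') ⊆ Cyl (prefixPath x l) :=
  fun _ hy => ⟨hy.1, fun i => hy.2 (Fin.castLE h i)⟩

lemma exists_cyl_prefixPath_subset {x : PathSpace k N A} {U : Set (PathSpace k N A)}
    (hU : U ∈ 𝓝 x) : ∃ l, Cyl (prefixPath x l) ⊆ U := by
  obtain ⟨V, hVU, hV, hxV⟩ := mem_nhds_iff.1 hU
  suffices H : ∀ V, GenerateOpen (cylinderSets k N A) V → x ∈ V →
      ∃ l, Cyl (prefixPath x l) ⊆ V by
    obtain ⟨l, hl⟩ := H V hV hxV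
    exact ⟨l, hl.trans hVU⟩
  intro V hV
  induction hV with
  | basic s hs =>
    obtain ⟨l, lam, rfl⟩ := hs
    exact fun hx => ⟨l, fun y hy => ⟨hy.1.trans hx.1, fun i => (hy.2 i).trans (hx.2 i)⟩⟩
  | univ => exact fun _ => ⟨0, subset_univ _⟩
  | inter s t _ _ ihs iht =>
    rintro ⟨hxs, hxt⟩
    obtain ⟨l₁, h₁⟩ := ihs hxs
    obtain ⟨l₂, h₂⟩ := iht hxt
    exact ⟨max l₁ l₂, subset_inter
      ((cyl_prefixPath_subset x (le_max_left l₁ l₂)).trans h₁)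
      ((cyl_prefixPath_subset x (le_max_right l₁ l₂)).trans h₂)⟩
  | sUnion S _ ih =>
    rintro ⟨s, hsS, hxs⟩
    obtain ⟨l, hl⟩ := ih s hsS hxs
    exact ⟨l, hl.trans (subset_sUnion_of_mem hsS)⟩

lemma continuous_apply_edge (j : ℕ) : Continuous fun x : PathSpace k N A => x.1 j := by
  refine continuous_discrete_rng.2 fun e => isOpen_iff_mem_nhds.2 fun x hx => ?_
  refine Filter.mem_of_superset ((isOpen_cyl _).mem_nhds (mem_cyl_prefixPath x (j + 1)))
    fun y hy => ?_
  exact (hy.2 (Fin.last j)).trans hx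

lemma isEmbedding_val : IsEmbedding fun x : PathSpace k N A => x.1 := by
  have hcont : Continuous fun x : PathSpace k N A => x.1 := continuous_pi continuous_apply_edge
  refine ⟨⟨le_antisymm (continuous_iff_le_induced.1 hcont) (le_generateFrom ?_)⟩,
    fun _ _ => Subtype.ext⟩
  rintro _ ⟨ℓ, lam, rfl⟩
  refine isOpen_induced_iff.2
    ⟨{f | (f 0).rg = lam.rg} ∩ ⋂ i : Fin ℓ, {f | f i = lam.edge i}, ?_, ?_⟩
  · exact ((isOpen_discrete {e : Edge k N A 0 | e.rg = lam.rg}).preimage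
      (continuous_apply 0)).inter (isOpen_iInter_of_finite fun i =>
        (isOpen_discrete {lam.edge i}).preimage (continuous_apply (i : ℕ)))
  · ext x
    simp [Cyl]

lemma isClosed_range_val : IsClosed (range fun x : PathSpace k N A => x.1) := by
  have h : (range fun x : PathSpace k N A => x.1) = ⋂ n, {f | (f n).src = (f (n + 1)).rg} := by
    ext f
    simp only [mem_iInter, mem_range]
    exact ⟨fun ⟨x, hx⟩ n => hx ▸ x.2 n, fun h => ⟨⟨f, h⟩, rfl⟩⟩
  rw [h]
  exact isClosed_iInter fun n =>
    (isClosed_discrete {p : Edge k N A n × Edge k N A (n + 1) | p.1.src = p.2.rg}).preimage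
      ((continuous_apply n).prodMk (continuous_apply (n + 1)))

instance : CompactSpace (PathSpace k N A) :=
  ⟨isEmbedding_val.isCompact_iff.2 (by simpa using isClosed_range_val.isCompact)⟩

instance : T2Space (PathSpace k N A) := isEmbedding_val.t2Space

instance : TotallyDisconnectedSpace (PathSpace k N A) :=
  isEmbedding_val.isTotallyDisconnected_range.1
    (isTotallyDisconnected_of_totallyDisconnectedSpace _)

instance : MetrizableSpace (PathSpace k N A) := isEmbedding_val.metrizableSpace

section Branch

variable (hrow : ∀ i a, ∃ b, 0 < A i a b)

noncomputable def walk (n : ℕ) (a : Fin N) : ℕ → Fin N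
  | 0 => a
  | j + 1 => (hrow ((n + j : ℕ) : Fin k) (walk n a j)).choose

noncomputable def walkEdge (n : ℕ) (a : Fin N) (j : ℕ) (h : n ≤ j) : Edge k N A j where
  rg := walk hrow n a (j - n)
  src := walk hrow n a (j - n + 1)
  idx := ⟨0, by
    have h' : 0 < A ((n + (j - n) : ℕ) : Fin k) (walk hrow n a (j - n))
        (walk hrow n a (j - n + 1)) := (hrow _ _).choose_spec
    rwa [Nat.add_sub_cancel' h] at h'⟩

include hrow in
lemma nonempty_pathSpace [NeZero N] : Nonempty (PathSpace k N A) :=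
  ⟨⟨fun j => walkEdge hrow 0 0 j j.zero_le, fun j => by simp [walkEdge]⟩⟩

noncomputable def branchSeq (x : PathSpace k N A) (n : ℕ) (e : Edge k N A n) (j : ℕ) :
    Edge k N A j :=
  if h : j < n then x.1 j
  else if h' : j = n then Edge.cast (congrArg _ h'.symm) e
  else walkEdge hrow (n + 1) e.src j (by omega)

variable {hrow}

lemma branchSeq_of_lt {x : PathSpace k N A} {n j : ℕ} {e : Edge k N A n} (h : j < n) :
    branchSeq hrow x n e j = x.1 j := dif_pos h

lemma branchSeq_self {x : PathSpace k N A} {n : ℕ} {e : Edge k N A n} :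
    branchSeq hrow x n e n = e := by
  rw [branchSeq, dif_neg (lt_irrefl n), dif_pos rfl]
  rfl

lemma branchSeq_of_gt {x : PathSpace k N A} {n j : ℕ} {e : Edge k N A n} (h : n < j) :
    branchSeq hrow x n e j = walkEdge hrow (n + 1) e.src j h := by
  rw [branchSeq, dif_neg (by omega), dif_neg (by omega)]

lemma branchSeq_src_eq_rg {x : PathSpace k N A} {n : ℕ} {e : Edge k N A n}
    (he : e.rg = (x.1 n).rg) (j : ℕ) :
    (branchSeq hrow x n e j).src = (branchSeq hrow x n e (j + 1)).rg := by
  rcases lt_trichotomy (j + 1) n with h | rfl | h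
  · rw [branchSeq_of_lt (by omega), branchSeq_of_lt h]
    exact x.2 j
  · rw [branchSeq_of_lt (by omega), branchSeq_self, he]
    exact x.2 j
  · rcases (Nat.lt_succ_iff.1 h).eq_or_lt with rfl | h
    · rw [branchSeq_self, branchSeq_of_gt (Nat.lt_succ_self _)]
      simp [walkEdge, walk]
    · rw [branchSeq_of_gt h, branchSeq_of_gt (by omega)]
      simp [walkEdge, Nat.sub_add_comm h]

variable (hrow) in
include hrow in
lemma exists_mem_cyl_ne (x : PathSpace k N A) {l n : ℕ} (hln : l ≤ n) {e : Edge k N A n}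
    (he : e.rg = (x.1 n).rg) (hne : e ≠ x.1 n) : ∃ y ∈ Cyl (prefixPath x l), y ≠ x := by
  refine ⟨⟨branchSeq hrow x n e, branchSeq_src_eq_rg he⟩, ⟨?_, fun i => ?_⟩,
    fun h => ?_⟩
  · show (branchSeq hrow x n e 0).rg = (x.1 0).rg
    rcases n.eq_zero_or_pos with rfl | hn
    · rw [branchSeq_self, he]
    · rw [branchSeq_of_lt hn]
  · exact branchSeq_of_lt (i.2.trans_le hln)
  · exact hne (branchSeq_self.symm.trans (congrArg (fun y : PathSpace k N A => y.1 n) h))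

end Branch

def NoBranchingFrom (x : PathSpace k N A) (l : ℕ) : Prop :=
  ∀ n, l ≤ n → ∀ e : Edge k N A n, e.rg = (x.1 n).rg → e = x.1 n

lemma row_eq_single_of_unique_edge {n : ℕ} {e₀ : Edge k N A n}
    (hu : ∀ e : Edge k N A n, e.rg = e₀.rg → e = e₀) :
    A (n : Fin k) e₀.rg = Pi.single e₀.src 1 := by
  funext b
  by_cases hb : b = e₀.src
  · subst hb
    rw [Pi.single_eq_same]
    have hpos := e₀.idx.pos
    by_contra hne
    have h01 := (hu ⟨e₀.rg, e₀.src, ⟨0, hpos⟩⟩ rfl).trans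
      (hu ⟨e₀.rg, e₀.src, ⟨1, by omega⟩⟩ rfl).symm
    simp at h01
  · rw [Pi.single_eq_of_ne hb]
    by_contra hne
    exact hb (congrArg Edge.src (hu ⟨e₀.rg, b, ⟨0, Nat.pos_of_ne_zero hne⟩⟩ rfl))

lemma levelProd_mulVec_one_of_noBranchingFrom {x : PathSpace k N A} {l : ℕ}
    (hu : NoBranchingFrom x l) :
    ∀ L n, l ≤ n → (levelProd A n L *ᵥ 1) (x.1 n).rg = 1
  | 0, n, _ => by simp [levelProd]
  | L + 1, n, hn => by
    rw [levelProd_succ, ← mulVec_mulVec,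
      mulVec_apply_of_row_eq_single (row_eq_single_of_unique_edge (hu n hn)), x.2 n]
    exact levelProd_mulVec_one_of_noBranchingFrom hu L (n + 1) (by omega)

lemma prod_specRad_le_one_of_noBranchingFrom [NeZero N] (hcomm : ∀ i j, A i * A j = A j * A i)
    (hrow : ∀ i a, ∃ b, 0 < A i a b) (hirr : IrreducibleFamily A) {x : PathSpace k N A}
    {l : ℕ} (hu : NoBranchingFrom x l) :
    ∏ i, specRad (A i) ≤ 1 := by
  have hP : ∀ q, ((List.ofFn A).prod ^ q *ᵥ 1) (x.1 (l * k)).rg ≤ 1 := fun q => by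
    rw [← levelProd_mul_mul, levelProd_mulVec_one_of_noBranchingFrom hu _ _
      (Nat.le_mul_of_pos_right l (NeZero.pos k))]
  exact Finset.prod_le_one (fun _ _ => ENNReal.toReal_nonneg)
    fun i _ => specRad_le_one (mulVec_one_le_one_of_forall_pow hcomm hrow hirr hP i)

theorem perfect_univ [NeZero N] (hcomm : ∀ i j, A i * A j = A j * A i)
    (hrow : ∀ i a, ∃ b, 0 < A i a b) (hirr : IrreducibleFamily A)
    (hspec : 1 < ∏ i, specRad (A i)) : Perfect (univ : Set (PathSpace k N A)) := by
  refine ⟨isClosed_univ, preperfect_iff_nhds.2 fun x _ U hU => ?_⟩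
  obtain ⟨l, hl⟩ := exists_cyl_prefixPath_subset hU
  by_contra! hx
  have hu : NoBranchingFrom x l := by
    intro n hn e he
    by_contra hne
    obtain ⟨y, hy, hyx⟩ := exists_mem_cyl_ne hrow x hn he hne
    exact hyx (hx y ⟨hl hy, mem_univ y⟩)
  exact (prod_specRad_le_one_of_noBranchingFrom hcomm hrow hirr hu).not_gt hspec

end PathSpace

/-- If `A 1, …, A k` are pairwise commuting `N×N` matrices with
nonnegative integer entries and no zero rows which form an irreducible family, and the
product of their spectral radii exceeds `1`, then the infinite path space of the
stationary `k`-Bratteli diagram of the `A i` is a Cantor set: nonempty, compact,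
Hausdorff, totally disconnected, metrizable, with no isolated points. -/
theorem statement2 (k N : ℕ) [NeZero k] [NeZero N]
    (A : Fin k → Matrix (Fin N) (Fin N) ℕ)
    (hcomm : ∀ i j, A i * A j = A j * A i)
    (hrow : ∀ (i : Fin k) (a : Fin N), ∃ b, 0 < A i a b)
    (hirr : IrreducibleFamily A)
    (hspec : 1 < ∏ i : Fin k, specRad (A i)) :
    Nonempty (PathSpace k N A) ∧
    CompactSpace (PathSpace k N A) ∧
    T2Space (PathSpace k N A) ∧
    TotallyDisconnectedSpace (PathSpace k N A) ∧
    TopologicalSpace.MetrizableSpace (PathSpace k N A) ∧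
    Perfect (Set.univ : Set (PathSpace k N A)) :=
  ⟨nonempty_pathSpace hrow, inferInstance, inferInstance, inferInstance, inferInstance,
    perfect_univ hcomm hrow hirr hspec⟩

end KBratteli
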